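/- arXiv:1209.4984 — 6 statements merged into one kernel-verified Lean document; each statement's English description precedes it below -/
import Mathlib

section
/- Let M be a nonsingular n×n integer matrix with m = |det M|, and let a ∈ ℤⁿ. Then the order of the class of a in the group ℤⁿ/Mℤⁿ equals m / gcd(m, g), where g is the greatest common divisor of the n coordinates of the integer vector adj(M)·a (adj(M) being the adjugate matrix of M, so that m·M⁻¹·a = ±adj(M)·a and both vectors have the same coordinate gcd). -/
/-!
Since `adj(M) · M = det(M) · I`, a vector `v` lies in `Mℤⁿ` exactly when `det M` divides every
coordinate of `adj(M) · v`. Applied to `v = t • a` this says `t • [a] = 0` iff `m ∣ t · g`,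
i.e. (as `gcd(m t, g t) = t · gcd(m, g)`) iff `m / gcd(m, g) ∣ t`.
-/

namespace Matrix

theorem mem_range_mulVecLin_iff_det_dvd {ι R : Type*} [Fintype ι] [DecidableEq ι]
    [CommRing R] [IsDomain R] {M : Matrix ι ι R} (hM : M.det ≠ 0) (v : ι → R) :
    v ∈ LinearMap.range M.mulVecLin ↔ ∀ i, M.det ∣ (M.adjugate *ᵥ v) i := by
  constructor
  · rintro ⟨y, rfl⟩ i
    refine ⟨y i, ?_⟩
    rw [mulVecLin_apply, mulVec_mulVec, adjugate_mul, smul_mulVec, one_mulVec, Pi.smul_apply,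
      smul_eq_mul]
  · intro h
    choose y hy using h
    refine ⟨y, funext fun i => mul_left_cancel₀ hM ?_⟩
    have hadj : M.adjugate *ᵥ v = M.det • y := funext fun i => hy i
    have : M.det • (M *ᵥ y) = M.det • v := by
      rw [← mulVec_smul, ← hadj, mulVec_mulVec, mul_adjugate, smul_mulVec, one_mulVec]
    simpa using congrFun this i

end Matrix

theorem Nat.dvd_mul_finset_gcd_iff {ι : Type*} {s : Finset ι} {f : ι → ℕ} {m t : ℕ} :
    m ∣ t * s.gcd f ↔ ∀ i ∈ s, m ∣ t * f i := by
  rw [← normalize_eq t, ← Finset.gcd_mul_left, Finset.dvd_gcd_iff, normalize_eq]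

theorem Nat.dvd_mul_iff_dvd_mul_gcd {m t g : ℕ} : m ∣ t * g ↔ m ∣ t * Nat.gcd m g := by
  rw [← Nat.gcd_mul_left, Nat.dvd_gcd_iff]
  exact ⟨fun h => ⟨dvd_mul_left m t, h⟩, And.right⟩

theorem Nat.dvd_mul_iff_div_gcd_dvd {m t g : ℕ} (hm : 0 < m) :
    m ∣ t * g ↔ m / Nat.gcd m g ∣ t := by
  rw [Nat.div_dvd_iff_dvd_mul (Nat.gcd_dvd_left m g) (Nat.gcd_pos_of_pos_left g hm),
    Nat.dvd_mul_iff_dvd_mul_gcd, mul_comm]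

/-- Let `M` be a nonsingular `n × n` integer matrix with `m = |det M|`,
and let `a ∈ ℤⁿ`.  Then the order of the class of `a` in `ℤⁿ/Mℤⁿ` equals
`m / gcd(m, g)`, where `g` is the gcd of the `n` coordinates of `adj(M)·a`. -/
theorem stmt_5 (n : ℕ) (M : Matrix (Fin n) (Fin n) ℤ) (hM : M.det ≠ 0) (a : Fin n → ℤ) :
    addOrderOf
        (Submodule.Quotient.mk a : (Fin n → ℤ) ⧸ LinearMap.range M.mulVecLin) =
      M.det.natAbs /
        Nat.gcd M.det.natAbs
          (Finset.univ.gcd fun i : Fin n => ((M.adjugate.mulVec a) i).natAbs) := by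
  refine Nat.dvd_right_iff_eq.mp fun t => ?_
  rw [addOrderOf_dvd_iff_nsmul_eq_zero, ← Nat.dvd_mul_iff_div_gcd_dvd (Int.natAbs_pos.mpr hM),
    Nat.dvd_mul_finset_gcd_iff, ← Nat.cast_smul_eq_nsmul ℤ, ← Submodule.Quotient.mk_smul,
    Submodule.Quotient.mk_eq_zero, Matrix.mem_range_mulVecLin_iff_det_dvd hM, Matrix.mulVec_smul]
  simp only [Finset.mem_univ, true_implies, Pi.smul_apply, smul_eq_mul, ← Int.natAbs_dvd_natAbs,
    Int.natAbs_mul, Int.natAbs_natCast]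
end

section
/- Let M be a nonsingular n×n integer matrix (n ≥ 2) whose (n−1)-th determinantal divisor d_{n−1}(M) equals 1 (equivalently, the gcd of the entries of the adjugate of M is 1), and let A ⊆ ℤⁿ/Mℤⁿ be a finite set. Then the multidimensional circulant digraph G(M;A) is a circulant: with m = |det M|, there exist a set B ⊆ ℤ/mℤ and a bijection e : ℤⁿ/Mℤⁿ → ℤ/mℤ such that for all u, v, v − u ∈ A if and only if e(v) − e(u) ∈ B. -/
/-- The `k`-th determinantal divisor of an `n × n` integer matrix `M`: the gcd of the
(absolute values of the) determinants of all `k × k` submatrices of `M`. -/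
noncomputable def detDivisor (n : ℕ) (M : Matrix (Fin n) (Fin n) ℤ) (k : ℕ) : ℕ :=
  Finset.univ.gcd fun p : (Fin k ↪ Fin n) × (Fin k ↪ Fin n) =>
    ((M.submatrix p.1 p.2).det).natAbs

/-!
The quotient `G = ℤⁿ/Mℤⁿ` has order `|det M|`. If `e` annihilates `G`, then for every `x` we
have `M y = e x` for some `y`, and multiplying by `adj M` shows that `det M` divides `e` times
every entry of `adj M`, i.e. `e` times every `(n-1)`-minor. As these minors have gcd `1`,
`|det M|` divides the exponent of `G`, so `G` is cyclic of order `|det M|`. An isomorphism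
`G ≃+ ℤ/|det M|ℤ` then carries the connection set `A` to `B`.
-/

open Matrix

lemma Fin.exists_succAbove_comp_perm {n : ℕ} (p : Fin n ↪ Fin (n + 1)) :
    ∃ (j : Fin (n + 1)) (σ : Equiv.Perm (Fin n)), ⇑p = j.succAbove ∘ σ := by
  obtain ⟨j, hj⟩ : ∃ j, j ∉ Set.range p := by
    by_contra! h
    simpa using Fintype.card_le_of_surjective p h
  choose σ hσ using fun k => Fin.exists_succAbove_eq fun h : p k = j => hj ⟨k, h⟩
  have hσinj : Function.Injective σ := fun a b hab =>
    p.injective (by rw [← hσ a, ← hσ b, hab])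
  exact ⟨j, Equiv.ofBijective σ (Finite.injective_iff_bijective.mp hσinj),
    funext fun k => (hσ k).symm⟩

lemma Matrix.exists_associated_det_submatrix_adjugate {R : Type*} [CommRing R] {n : ℕ}
    (M : Matrix (Fin (n + 1)) (Fin (n + 1)) R) (p q : Fin n ↪ Fin (n + 1)) :
    ∃ i j, Associated (M.submatrix p q).det (M.adjugate i j) := by
  obtain ⟨i, σ, hp⟩ := Fin.exists_succAbove_comp_perm p
  obtain ⟨j, τ, hq⟩ := Fin.exists_succAbove_comp_perm q
  have hdet : (M.submatrix p q).det
      = ((Equiv.Perm.sign σ * Equiv.Perm.sign τ : ℤˣ) : R) *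
          (M.submatrix i.succAbove j.succAbove).det := by
    have hsub : M.submatrix p q
        = ((M.submatrix i.succAbove j.succAbove).submatrix σ id).submatrix id τ := by
      rw [hp, hq]; rfl
    rw [hsub, det_permute', det_permute]
    push_cast
    ring
  refine ⟨j, i, ?_⟩
  rw [hdet, adjugate_fin_succ_eq_det_submatrix]
  have hsign : IsUnit (((Equiv.Perm.sign σ * Equiv.Perm.sign τ : ℤˣ) : ℤ) : R) :=
    (Units.isUnit _).map (Int.castRingHom R)
  exact (associated_unit_mul_left _ _ hsign).trans
    (associated_unit_mul_left _ _ (isUnit_one.neg.pow _)).symm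

lemma Matrix.det_dvd_mul_adjugate_of_forall_exists_mulVec_eq {ι R : Type*} [Fintype ι]
    [DecidableEq ι] [CommRing R] (M : Matrix ι ι R) (c : R)
    (h : ∀ x, ∃ y, M *ᵥ y = c • x) (i j : ι) : M.det ∣ c * M.adjugate i j := by
  obtain ⟨y, hy⟩ := h (Pi.single j 1)
  have := congrArg (M.adjugate *ᵥ ·) hy
  simp only [mulVec_mulVec, adjugate_mul, mulVec_smul, mulVec_single_one, smul_mulVec,
    one_mulVec] at this
  exact ⟨y i, by simpa using (congrFun this i).symm⟩

lemma natAbs_det_dvd_mul_detDivisor_pred {n : ℕ} (M : Matrix (Fin n) (Fin n) ℤ) (c : ℤ)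
    (h : ∀ i j, M.det ∣ c * M.adjugate i j) :
    M.det.natAbs ∣ c.natAbs * detDivisor n M (n - 1) := by
  cases n with
  | zero => simp
  | succ n =>
    rw [detDivisor, Nat.add_sub_cancel]
    refine (Finset.gcd_mul_left' _ _ _).dvd_iff_dvd_right.mp (Finset.dvd_gcd fun ⟨p, q⟩ _ => ?_)
    obtain ⟨i, j, hij⟩ := M.exists_associated_det_submatrix_adjugate p q
    rw [← Int.natAbs_mul, Int.natAbs_dvd_natAbs]
    exact ((hij.mul_left c).dvd_iff_dvd_right).mpr (h i j)

lemma Matrix.natCard_quotient_range_mulVecLin {ι : Type*} [Fintype ι] [DecidableEq ι]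
    (M : Matrix ι ι ℤ) (hM : M.det ≠ 0) :
    Nat.card ((ι → ℤ) ⧸ LinearMap.range M.mulVecLin) = M.det.natAbs := by
  let e := LinearEquiv.ofInjective M.mulVecLin (mulVec_injective_of_det_ne_zero hM)
  rw [← Submodule.natAbs_det_equiv _ e]
  have hcomp : (LinearMap.range M.mulVecLin).subtype ∘ₗ (e : _ →+ _).toIntLinearMap
      = M.mulVecLin := rfl
  rw [hcomp, ← toLin'_apply', LinearMap.det_toLin']

lemma Matrix.natAbs_det_dvd_exponent_quotient_range_mulVecLin {n : ℕ}
    (M : Matrix (Fin n) (Fin n) ℤ) (hd : detDivisor n M (n - 1) = 1) :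
    M.det.natAbs ∣ AddMonoid.exponent ((Fin n → ℤ) ⧸ LinearMap.range M.mulVecLin) := by
  set G := (Fin n → ℤ) ⧸ LinearMap.range M.mulVecLin
  set e := AddMonoid.exponent G
  have hsurj (x : Fin n → ℤ) : ∃ y, M *ᵥ y = (e : ℤ) • x := by
    have hx := AddMonoid.exponent_nsmul_eq_zero (Submodule.Quotient.mk x : G)
    rwa [← Nat.cast_smul_eq_nsmul ℤ, ← Submodule.Quotient.mk_smul,
      Submodule.Quotient.mk_eq_zero] at hx
  simpa [hd] using natAbs_det_dvd_mul_detDivisor_pred M e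
    (M.det_dvd_mul_adjugate_of_forall_exists_mulVec_eq _ hsurj)

lemma Matrix.nonempty_quotient_range_mulVecLin_addEquiv_zmod {n : ℕ}
    (M : Matrix (Fin n) (Fin n) ℤ) (hM : M.det ≠ 0) (hd : detDivisor n M (n - 1) = 1) :
    Nonempty (((Fin n → ℤ) ⧸ LinearMap.range M.mulVecLin) ≃+ ZMod M.det.natAbs) := by
  set G := (Fin n → ℤ) ⧸ LinearMap.range M.mulVecLin
  have hcard : Nat.card G = M.det.natAbs := M.natCard_quotient_range_mulVecLin hM
  have : Finite G := Nat.finite_of_card_ne_zero (hcard ▸ Int.natAbs_ne_zero.mpr hM)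
  have hexp : AddMonoid.exponent G = Nat.card G :=
    Nat.dvd_antisymm AddGroup.exponent_dvd_nat_card
      (hcard ▸ M.natAbs_det_dvd_exponent_quotient_range_mulVecLin hd)
  exact ⟨hcard ▸ (zmodAddCyclicAddEquiv (IsAddCyclic.of_exponent_eq_card hexp)).symm⟩

theorem stmt_9_general (n : ℕ) (M : Matrix (Fin n) (Fin n) ℤ) (hM : M.det ≠ 0)
    (hd : detDivisor n M (n - 1) = 1)
    (A : Set ((Fin n → ℤ) ⧸ LinearMap.range M.mulVecLin)) :
    ∃ (B : Set (ZMod M.det.natAbs))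
      (e : ((Fin n → ℤ) ⧸ LinearMap.range M.mulVecLin) ≃ ZMod M.det.natAbs),
      ∀ u v : (Fin n → ℤ) ⧸ LinearMap.range M.mulVecLin,
        v - u ∈ A ↔ e v - e u ∈ B := by
  obtain ⟨ψ⟩ := M.nonempty_quotient_range_mulVecLin_addEquiv_zmod hM hd
  refine ⟨ψ.symm ⁻¹' A, ψ.toEquiv, fun u v => ?_⟩
  simp

/-- Let `M` be a nonsingular `n × n` integer matrix (`n ≥ 2`) whose
`(n-1)`-th determinantal divisor equals `1`, and let `A ⊆ ℤⁿ/Mℤⁿ` be a finite set.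
Then the multidimensional circulant digraph `G(M;A)` is a circulant: with
`m = |det M|`, there exist a set `B ⊆ ℤ/mℤ` and a bijection `e : ℤⁿ/Mℤⁿ → ℤ/mℤ` such
that for all `u, v`, `v - u ∈ A` if and only if `e v - e u ∈ B`. -/
theorem stmt_9 (n : ℕ) (hn : 2 ≤ n) (M : Matrix (Fin n) (Fin n) ℤ) (hM : M.det ≠ 0)
    (hd : detDivisor n M (n - 1) = 1)
    (A : Set ((Fin n → ℤ) ⧸ LinearMap.range M.mulVecLin)) (hA : A.Finite) :
    ∃ (B : Set (ZMod M.det.natAbs))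
      (e : ((Fin n → ℤ) ⧸ LinearMap.range M.mulVecLin) ≃ ZMod M.det.natAbs),
      ∀ u v : (Fin n → ℤ) ⧸ LinearMap.range M.mulVecLin,
        v - u ∈ A ↔ e v - e u ∈ B :=
  stmt_9_general n M hM hd A
end

section
/- Let p be a prime with p > 2 and n ≥ 1, and let G be the n-fold cartesian product K_p × ⋯ × K_p of complete graphs on p vertices: the simple graph on vertex set (ℤ/pℤ)ⁿ in which u and v are adjacent if and only if there exists exactly one index i with u(i) ≠ v(i) and u(j) = v(j) for all j ≠ i (the Hamming graph H(n,p)). Then every abelian group Ω of adjacency-preserving permutations of the vertex set that acts transitively on the vertices and has cardinality pⁿ is isomorphic as a group to (ℤ/pℤ)ⁿ; hence K_p × ⋯ × K_p has dimension n. -/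
/-!
An abelian transitive permutation group `Ω` acts regularly. Let `σ ∈ Ω` move a vertex `x` to a
neighbour, so that `σ x` lies on the line (maximal clique) through `x` in some direction `i`.
Because `p > 2`, some `τ ∈ Ω` takes `x` to a third point of that line, and since `σ` commutes
with `τ` and both preserve adjacency, `σ` maps the line into itself. The `⟨σ⟩`-orbit of `x`,
which has `orderOf σ` points by regularity, thus has at most `p` points; as `orderOf σ` divides
`|Ω| = pⁿ`, we get `σ ^ p = 1`. The Hamming graph is connected, so these elements generate `Ω`,
which is therefore an elementary abelian `p`-group of order `pⁿ`, i.e. `𝔽_pⁿ`.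
-/

open Equiv Function Set Relation

theorem nonempty_mulEquiv_of_pow_prime_eq_one {G : Type*} [CommGroup G] {p n : ℕ}
    [hp : Fact p.Prime] (hcard : Nat.card G = p ^ n) (hexp : ∀ g : G, g ^ p = 1) :
    Nonempty (G ≃* Multiplicative (Fin n → ZMod p)) := by
  have : Finite G := Nat.finite_of_card_ne_zero (by simp [hcard, hp.out.ne_zero])
  have : NeZero p := ⟨hp.out.ne_zero⟩
  have : Module (ZMod p) (Additive G) := AddCommGroup.zmodModule fun g ↦ hexp g.toMul
  have hrank :
      Module.finrank (ZMod p) (Additive G) = Module.finrank (ZMod p) (Fin n → ZMod p) := by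
    have hpow : Nat.card (Additive G) = p ^ Module.finrank (ZMod p) (Additive G) := by
      rw [Module.natCard_eq_pow_finrank (K := ZMod p), Nat.card_zmod]
    rw [Nat.card_congr Additive.toMul, hcard] at hpow
    simpa using (Nat.pow_right_injective hp.out.two_le hpow).symm
  obtain ⟨e⟩ := FiniteDimensional.nonempty_linearEquiv_of_finrank_eq hrank
  exact ⟨MulEquiv.toAdditive.symm e.toAddEquiv⟩

theorem Nat.dvd_prime_of_dvd_prime_pow_of_le {p n d : ℕ} (hp : p.Prime) (hdvd : d ∣ p ^ n)
    (hle : d ≤ p) : d ∣ p := by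
  obtain ⟨t, -, rfl⟩ := (Nat.dvd_prime_pow hp).1 hdvd
  have ht : t ≤ 1 := (Nat.pow_le_pow_iff_right hp.one_lt).1 (by simpa using hle)
  simpa using pow_dvd_pow p ht

section RegularAbelian

variable {X : Type*} {Ω : Subgroup (Perm X)}

theorem eq_of_apply_eq_of_commute (hcomm : ∀ σ ∈ Ω, ∀ τ ∈ Ω, σ * τ = τ * σ) {x : X}
    (htrans : ∀ y, ∃ ρ ∈ Ω, ρ x = y) {σ τ : Perm X} (hσ : σ ∈ Ω) (hτ : τ ∈ Ω)
    (h : σ x = τ x) : σ = τ := by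
  ext y
  obtain ⟨ρ, hρ, rfl⟩ := htrans y
  rw [← Perm.mul_apply, hcomm σ hσ ρ hρ, Perm.mul_apply, h, ← Perm.mul_apply,
    ← hcomm τ hτ ρ hρ, Perm.mul_apply]

theorem pow_eq_one_of_reflTransGen {r : X → X → Prop} (m : ℕ)
    (hcomm : ∀ σ ∈ Ω, ∀ τ ∈ Ω, σ * τ = τ * σ) {x : X} (htrans : ∀ y, ∃ ρ ∈ Ω, ρ x = y)
    (haut : ∀ σ ∈ Ω, ∀ u v, r u v → r (σ u) (σ v)) (hconn : ∀ y, ReflTransGen r x y)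
    (hstep : ∀ σ ∈ Ω, r x (σ x) → σ ^ m = 1) {σ : Perm X} (hσ : σ ∈ Ω) : σ ^ m = 1 := by
  have hreach : ∀ y, ∃ τ ∈ Ω, τ x = y ∧ τ ^ m = 1 := by
    intro y
    induction hconn y with
    | refl => exact ⟨1, Ω.one_mem, rfl, one_pow m⟩
    | @tail u v _ huv ih =>
      obtain ⟨τ, hτ, rfl, hτm⟩ := ih
      obtain ⟨ρ, hρ, rfl⟩ := htrans v
      have hτρ : τ⁻¹ * ρ ∈ Ω := Ω.mul_mem (Ω.inv_mem hτ) hρ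
      have hτρm : (τ⁻¹ * ρ) ^ m = 1 :=
        hstep _ hτρ (by simpa using haut τ⁻¹ (Ω.inv_mem hτ) _ _ huv)
      refine ⟨ρ, hρ, rfl, ?_⟩
      calc ρ ^ m = (τ * (τ⁻¹ * ρ)) ^ m := by rw [mul_inv_cancel_left]
        _ = τ ^ m * (τ⁻¹ * ρ) ^ m := Commute.mul_pow (hcomm τ hτ _ hτρ) m
        _ = 1 := by rw [hτm, hτρm, one_mul]
  obtain ⟨τ, hτ, hτx, hτm⟩ := hreach (σ x)
  rwa [← eq_of_apply_eq_of_commute hcomm htrans hτ hσ hτx]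

end RegularAbelian

namespace HammingGraph

variable {ι α : Type*}

def Adj (u v : ι → α) : Prop := ∃ i, u i ≠ v i ∧ ∀ j ≠ i, u j = v j

def line (x : ι → α) (i : ι) : Set (ι → α) := {y | ∀ j ≠ i, x j = y j}

variable {u v w x y z : ι → α} {i j : ι}

theorem mem_line_self : x ∈ line x i := fun _ _ ↦ rfl

theorem line_eq_of_mem (hy : y ∈ line x i) : line y i = line x i := by
  ext z
  exact forall₂_congr fun j hj ↦ by rw [hy j hj]

theorem eq_of_mem_line (hy : y ∈ line x i) (hz : z ∈ line x i) (h : y i = z i) : y = z := by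
  funext j
  by_cases hj : j = i
  · exact hj ▸ h
  · exact (hy j hj).symm.trans (hz j hj)

theorem apply_ne_of_mem_line (hy : y ∈ line x i) (hz : z ∈ line x i) (hne : y ≠ z) :
    y i ≠ z i :=
  fun h ↦ hne (eq_of_mem_line hy hz h)

theorem adj_of_mem_line (hy : y ∈ line x i) (hz : z ∈ line x i) (hne : y ≠ z) : Adj y z :=
  ⟨i, apply_ne_of_mem_line hy hz hne, fun j hj ↦ (hy j hj).symm.trans (hz j hj)⟩

theorem Adj.eq_of_apply_ne (h : Adj u v) (hi : u i ≠ v i) (hj : u j ≠ v j) : i = j := by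
  obtain ⟨k, -, hk⟩ := h
  by_contra hij
  by_cases hik : i = k
  · exact hj (hk j fun hjk ↦ hij (hik.trans hjk.symm))
  · exact hi (hk i hik)

theorem Adj.mem_line (h : Adj u v) (hi : u i ≠ v i) : v ∈ line u i := by
  obtain ⟨k, hk, hkv⟩ := id h
  exact h.eq_of_apply_ne hk hi ▸ hkv

theorem mem_line_of_adj_of_adj (hv : v ∈ line u i) (hne : u ≠ v) (huw : Adj u w)
    (hvw : Adj v w) : w ∈ line u i := by
  obtain ⟨k, -, hwk⟩ := huw
  by_cases hki : k = i
  · exact hki ▸ hwk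
  have hvi : v i ≠ w i := by
    rw [← hwk i (Ne.symm hki)]
    exact (apply_ne_of_mem_line mem_line_self hv hne).symm
  rw [← line_eq_of_mem hv]
  exact hvw.mem_line hvi

theorem exists_mem_line_ne_ne [Fintype α] [DecidableEq ι] (hα : 2 < Fintype.card α)
    (x y : ι → α) (i : ι) : ∃ z ∈ line x i, x ≠ z ∧ y ≠ z := by
  classical
  obtain ⟨s, -, hs⟩ := Finset.exists_mem_notMem_of_card_lt_card
    ((Finset.card_le_two (a := x i) (b := y i)).trans_lt hα)
  simp only [Finset.mem_insert, Finset.mem_singleton, not_or] at hs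
  refine ⟨update x i s, fun j hj ↦ (update_of_ne hj s x).symm, fun h ↦ hs.1 ?_, fun h ↦ hs.2 ?_⟩
  · simpa using (congrFun h i).symm
  · simpa using (congrFun h i).symm

theorem reflTransGen_adj [Fintype ι] [DecidableEq ι] (x y : ι → α) : ReflTransGen Adj x y := by
  suffices ∀ s : Finset ι, ReflTransGen Adj x (s.piecewise y x) by
    simpa using this Finset.univ
  intro s
  induction s using Finset.induction_on with
  | empty => simpa using ReflTransGen.refl
  | insert i s _ ih =>
    rw [Finset.piecewise_insert]
    set u := s.piecewise y x
    by_cases hi : u i = y i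
    · rwa [← hi, update_eq_self]
    · exact ih.tail ⟨i, by simpa using hi, fun j hj ↦ (update_of_ne hj _ u).symm⟩

theorem mapsTo_line_of_commute {σ τ : Perm (ι → α)} (hσ : ∀ u v, Adj u v → Adj (σ u) (σ v))
    (hτ : ∀ u v, Adj u v → Adj (τ u) (τ v)) (hστ : σ * τ = τ * σ)
    (hσx : σ x ∈ line x i) (hxσ : x ≠ σ x) (hτx : τ x ∈ line x i) (hxτ : x ≠ τ x)
    (hστ' : σ x ≠ τ x) : MapsTo σ (line x i) (line x i) := by
  have hxa := adj_of_mem_line mem_line_self hσx hxσ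
  have hxb := adj_of_mem_line mem_line_self hτx hxτ
  have hab := adj_of_mem_line hσx hτx hστ'
  have hσa : σ (σ x) ∈ line x i := by
    obtain ⟨k, hk, hak⟩ := hσ _ _ hxa
    have hσb : σ (τ x) ∈ line (σ x) k :=
      mem_line_of_adj_of_adj hak (fun h ↦ hk (congrFun h k)) (hσ _ _ hxb) (hσ _ _ hab)
    obtain rfl : k = i := by
      by_contra hki
      -- `σ (τ x) = τ (σ x)` is adjacent to `τ x`, yet differs from it in coordinates `i` and `k`.
      have hadj : Adj (τ x) (σ (τ x)) := by
        rw [← Perm.mul_apply, hστ, Perm.mul_apply]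
        exact hτ _ _ hxa
      refine hki (hadj.eq_of_apply_ne ?_ ?_)
      · rw [← hτx k hki, hσx k hki]
        exact apply_ne_of_mem_line mem_line_self hσb (σ.injective.ne hxτ)
      · rw [← hσb i (Ne.symm hki)]
        exact (apply_ne_of_mem_line hσx hτx hστ').symm
    rw [← line_eq_of_mem hσx]
    exact hak
  intro y hy
  by_cases hyx : y = x
  · exact hyx ▸ hσx
  by_cases hya : y = σ x
  · exact hya ▸ hσa
  rw [← line_eq_of_mem hσx]
  exact mem_line_of_adj_of_adj (line_eq_of_mem hσx ▸ hσa)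
    (σ.injective.ne hxσ)
    (hσ _ _ (adj_of_mem_line mem_line_self hy (Ne.symm hyx)))
    (hσ _ _ (adj_of_mem_line hσx hy (Ne.symm hya)))

theorem orderOf_le_card_of_adj [Fintype α] [DecidableEq ι] (hα : 2 < Fintype.card α)
    {Ω : Subgroup (Perm (ι → α))} (hcomm : ∀ σ ∈ Ω, ∀ τ ∈ Ω, σ * τ = τ * σ) {x : ι → α}
    (htrans : ∀ y, ∃ ρ ∈ Ω, ρ x = y) (haut : ∀ σ ∈ Ω, ∀ u v, Adj u v → Adj (σ u) (σ v))
    {σ : Perm (ι → α)} (hσ : σ ∈ Ω) (hadj : Adj x (σ x)) : orderOf σ ≤ Fintype.card α := by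
  obtain ⟨i, hi, hσx⟩ := hadj
  obtain ⟨c, hc, hxc, hσc⟩ := exists_mem_line_ne_ne hα x (σ x) i
  obtain ⟨τ, hτ, rfl⟩ := htrans c
  have hmaps := mapsTo_line_of_commute (haut σ hσ) (haut τ hτ) (hcomm σ hσ τ hτ) hσx
    (fun h ↦ hi (congrFun h i)) hc hxc hσc
  have horbit (k : ℕ) : (σ ^ k) x ∈ line x i := by
    rw [Perm.coe_pow]
    exact hmaps.iterate k mem_line_self
  -- On a line a point is determined by its `i`-th coordinate, and `Ω` acts regularly.
  refine Finset.le_card_of_inj_on_range (fun k ↦ (σ ^ k) x i) (fun _ _ ↦ Finset.mem_univ _)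
    fun k hk l hl h ↦ pow_injOn_Iio_orderOf hk hl ?_
  exact eq_of_apply_eq_of_commute hcomm htrans (Ω.pow_mem hσ k) (Ω.pow_mem hσ l)
    (eq_of_mem_line (horbit k) (horbit l) h)

end HammingGraph

theorem stmt_15_general (p n : ℕ) (hp : p.Prime) (hp2 : 2 < p)
    (Adj : (Fin n → ZMod p) → (Fin n → ZMod p) → Prop)
    (hAdj : ∀ u v, Adj u v ↔ ∃ i, u i ≠ v i ∧ ∀ j ≠ i, u j = v j)
    (Ω : Subgroup (Equiv.Perm (Fin n → ZMod p)))
    (hcomm : ∀ σ ∈ Ω, ∀ τ ∈ Ω, σ * τ = τ * σ)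
    (haut : ∀ σ ∈ Ω, ∀ u v, Adj (σ u) (σ v) ↔ Adj u v)
    (htrans : ∀ u v : Fin n → ZMod p, ∃ σ ∈ Ω, σ u = v)
    (hcard : Nat.card Ω = p ^ n) :
    Nonempty (Ω ≃* Multiplicative (Fin n → ZMod p)) := by
  obtain rfl : Adj = HammingGraph.Adj := by
    ext u v
    exact hAdj u v
  have : Fact p.Prime := ⟨hp⟩
  have haut' : ∀ σ ∈ Ω, ∀ u v, HammingGraph.Adj u v → HammingGraph.Adj (σ u) (σ v) :=
    fun σ hσ u v ↦ (haut σ hσ u v).2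
  have hexp : ∀ σ ∈ Ω, σ ^ p = 1 := by
    refine fun σ hσ ↦ pow_eq_one_of_reflTransGen p hcomm (htrans 0) haut'
      (HammingGraph.reflTransGen_adj 0) (fun τ hτ hadj ↦ ?_) hσ
    refine orderOf_dvd_iff_pow_eq_one.1 (Nat.dvd_prime_of_dvd_prime_pow_of_le hp
      (hcard ▸ Ω.orderOf_dvd_natCard hτ) ?_)
    simpa using
      HammingGraph.orderOf_le_card_of_adj (by simpa using hp2) hcomm (htrans 0) haut' hτ hadj
  let : CommGroup Ω := { mul_comm := fun a b ↦ Subtype.ext (hcomm a a.2 b b.2) }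
  exact nonempty_mulEquiv_of_pow_prime_eq_one hcard fun g ↦ Subtype.ext (hexp g g.2)

/-- Let `p > 2` be a prime and `n ≥ 1`, and let `G` be the `n`-fold
cartesian product `K_p × ⋯ × K_p` of complete graphs on `p` vertices (the Hamming graph
`H(n,p)`): the graph on `(ℤ/pℤ)ⁿ` in which `u` and `v` are adjacent iff they differ in
exactly one coordinate.  Then every abelian group `Ω` of adjacency-preserving
permutations of the vertex set that acts transitively on the vertices and has
cardinality `pⁿ` is isomorphic as a group to `(ℤ/pℤ)ⁿ`; hence `K_p × ⋯ × K_p` has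
dimension `n`. -/
theorem stmt_15 (p n : ℕ) (hp : p.Prime) (hp2 : 2 < p) (hn : 1 ≤ n)
    (Adj : (Fin n → ZMod p) → (Fin n → ZMod p) → Prop)
    (hAdj : ∀ u v, Adj u v ↔ ∃ i, u i ≠ v i ∧ ∀ j ≠ i, u j = v j)
    (Ω : Subgroup (Equiv.Perm (Fin n → ZMod p)))
    (hcomm : ∀ σ ∈ Ω, ∀ τ ∈ Ω, σ * τ = τ * σ)
    (haut : ∀ σ ∈ Ω, ∀ u v, Adj (σ u) (σ v) ↔ Adj u v)
    (htrans : ∀ u v : Fin n → ZMod p, ∃ σ ∈ Ω, σ u = v)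
    (hcard : Nat.card Ω = p ^ n) :
    Nonempty (Ω ≃* Multiplicative (Fin n → ZMod p)) :=
  stmt_15_general p n hp hp2 Adj hAdj Ω hcomm haut htrans hcard
end

section
/- Let p be a prime with p > 2 and n ≥ 1, and let G be the n-fold cartesian product of p-cycles: the simple graph on vertex set (ℤ/pℤ)ⁿ in which u and v are adjacent if and only if there exists an index i with v(i) − u(i) ∈ {1, −1} and u(j) = v(j) for all j ≠ i. Then every abelian group Ω of adjacency-preserving permutations of the vertex set that acts transitively on the vertices and has cardinality pⁿ is isomorphic as a group to (ℤ/pℤ)ⁿ; hence the cartesian product of n p-cycles has dimension n. -/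
/-!
View the product of `p`-cycles as the Cayley graph of `V = (ℤ/pℤ)ⁿ` with connection set
`S = {± eᵢ}`. Opposite steps `± s` have the single common neighbour `0`, and two steps `s, t`
with `t ≠ ± s` span a single square. A graph automorphism `f` therefore maps opposite steps to
opposite steps and squares to squares, so `f (u + s) - f u` does not depend on `u`, and `f` is
affine: `f v = f 0 + A v` with `A` a signed permutation matrix.

Let `σ, τ ∈ Ω` have linear parts `A, B` and let `c = τ 0`. Evaluating `σ τ = τ σ` at `0` gives
`B (σ 0) = σ 0 + (A - 1) c`, and `B` preserves `Q x = x ⬝ᵥ x`. By transitivity `c` is arbitrary;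
for `c = ± eᵢ` the parallelogram law gives `2 Q (A eᵢ - eᵢ) = 0`, and as `p` is odd this forces
`A eᵢ = eᵢ`. So `Ω` consists of translations, and `σ ↦ σ 0` is the isomorphism.
-/

open Finset

namespace AddSubgroup

variable {V : Type*}

theorem apply_add_eq_of_closure_eq_top {X : Type*} [AddGroup V] {S : Set V}
    (hS : closure S = ⊤) {g : V → X} (hg : ∀ u, ∀ s ∈ S, g (u + s) = g u) (u v : V) :
    g (u + v) = g u := by
  induction (hS ▸ mem_top v : v ∈ closure S) using closure_induction generalizing u with
  | mem s hs => exact hg u s hs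
  | zero => rw [add_zero]
  | add v w _ _ hv hw => rw [← add_assoc, hw, hv]
  | neg v _ hv => rw [← hv (u + -v), neg_add_cancel_right]

theorem exists_addMonoidHom_of_closure_eq_top {W : Type*} [AddCommGroup V] [AddCommGroup W]
    {S : Set V} (hS : closure S = ⊤) {g : V → W}
    (hg : ∀ v, ∀ s ∈ S, g (v + s) - g v = g s - g 0) :
    ∃ φ : V →+ W, ∀ v, g v = g 0 + φ v := by
  have hadd (u w : V) : g (u + w) - g u = g w - g 0 := by
    have := apply_add_eq_of_closure_eq_top hS (g := fun u => g (u + w) - g u) (fun u s hs => by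
      have h₁ := hg (u + w) s hs
      have h₂ := hg u s hs
      simp only [add_right_comm u s w]
      grind) 0 u
    simpa using this
  refine ⟨{ toFun v := g v - g 0, map_zero' := sub_self _, map_add' v w := ?_ }, fun v => ?_⟩
  · grind
  · simp

end AddSubgroup

section CayleyGraph

variable {V : Type*} [AddCommGroup V]

/-- In the Cayley graph of `V` with connection set `S`: `S` is symmetric, the only common
neighbour of `s` and `-s` is `0`, and two steps `s`, `t` with `t ≠ ± s` lie on a single square
`0, s, t, s + t`. -/
structure IsRigidConnectionSet (S : Set V) : Prop where
  neg_mem : ∀ s ∈ S, -s ∈ S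
  eq_neg_of_add_add_mem : ∀ s ∈ S, ∀ x ∈ S, x + s + s ∈ S → x = -s
  eq_neg_or_eq_of_add_eq_add :
    ∀ s ∈ S, ∀ t ∈ S, ∀ x ∈ S, ∀ y ∈ S, t ≠ s → t ≠ -s → s + x = t + y → x = -s ∨ x = t

def IsCayleyGraphAut (S : Set V) (f : Equiv.Perm V) : Prop :=
  ∀ u v, f u - f v ∈ S ↔ u - v ∈ S

namespace IsCayleyGraphAut

variable {S : Set V} {f : Equiv.Perm V}

theorem map_add_sub_map_mem (hf : IsCayleyGraphAut S f) (u : V) {s : V} (hs : s ∈ S) :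
    f (u + s) - f u ∈ S :=
  (hf _ _).2 (by rwa [add_sub_cancel_left])

theorem map_sub_sub_map (hf : IsCayleyGraphAut S f) (hS : IsRigidConnectionSet S) (u : V)
    {s : V} (hs : s ∈ S) : f (u - s) - f u = -(f (u + s) - f u) := by
  -- `w` is a common neighbour of `u + s` and `u - s`
  set w := f.symm (f (u + s) + f (u - s) - f u)
  have hfw : f w = f (u + s) + f (u - s) - f u := f.apply_symm_apply _
  have hw₁ : w - (u + s) ∈ S := (hf _ _).1 <| by
    rw [hfw, add_sub_assoc, add_sub_cancel_left]
    exact (hf _ _).2 (by simpa using hS.neg_mem s hs)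
  have hw₂ : w - (u - s) ∈ S := (hf _ _).1 <| by
    rw [hfw, add_sub_right_comm, add_sub_cancel_right]
    exact hf.map_add_sub_map_mem u hs
  have hwu : w = u := by
    have := hS.eq_neg_of_add_add_mem s hs _ hw₁
      (by rwa [show w - (u + s) + s + s = w - (u - s) by abel])
    grind
  rw [hwu] at hfw
  grind

theorem map_add_add_sub_map_add (hf : IsCayleyGraphAut S f) (hS : IsRigidConnectionSet S)
    (u : V) {s t : V} (hs : s ∈ S) (ht : t ∈ S) :
    f (u + t + s) - f (u + t) = f (u + s) - f u := by
  by_cases hts : t = s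
  · subst hts
    have := hf.map_sub_sub_map hS (u + t) ht
    rw [add_sub_cancel_right] at this
    grind
  by_cases hts' : t = -s
  · subst hts'
    have := hf.map_sub_sub_map hS u hs
    rw [neg_add_cancel_right, ← sub_eq_add_neg]
    grind
  have hne : f (u + t + s) ≠ f u := fun h => by
    have := f.injective h
    exact hts' (by simpa [add_assoc, add_eq_zero_iff_eq_neg] using this)
  have hx := hf.map_add_sub_map_mem u hs
  have hy := hf.map_add_sub_map_mem u ht
  have hX : f (u + t + s) - f (u + s) ∈ S :=
    (hf _ _).2 (by simpa [add_right_comm u t s] using ht)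
  have hY := hf.map_add_sub_map_mem (u + t) hs
  have hyx : f (u + t) - f u ≠ f (u + s) - f u := fun h =>
    hts (add_left_cancel (f.injective (sub_left_inj.1 h)))
  -- otherwise `f (u + t + s)` would be the common neighbour `f u` of `f u ± (f (u + s) - f u)`
  have hyx' : f (u + t) - f u ≠ -(f (u + s) - f u) := fun h => hne <| by
    have := hS.eq_neg_of_add_add_mem _ hx _ hX (by
      rw [show f (u + t + s) - f (u + s) + (f (u + s) - f u) + (f (u + s) - f u)
        = f (u + t + s) - f (u + t) by grind]
      exact hY)
    grind
  rcases hS.eq_neg_or_eq_of_add_eq_add _ hx _ hy _ hX _ hY hyx hyx' (by abel) with h | h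
  · exact absurd (by grind) hne
  · grind

theorem exists_addMonoidHom (hf : IsCayleyGraphAut S f) (hS : IsRigidConnectionSet S)
    (hgen : AddSubgroup.closure S = ⊤) : ∃ φ : V →+ V, ∀ v, f v = f 0 + φ v :=
  AddSubgroup.exists_addMonoidHom_of_closure_eq_top hgen fun v s hs => by
    simpa using AddSubgroup.apply_add_eq_of_closure_eq_top hgen (g := fun u => f (u + s) - f u)
      (fun u t ht => hf.map_add_add_sub_map_add hS u hs ht) 0 v

end IsCayleyGraphAut

end CayleyGraph

def signedUnitVectors (ι R : Type*) [DecidableEq ι] [Ring R] : Set (ι → R) :=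
  {x | ∃ i, ∃ d : R, (d = 1 ∨ d = -1) ∧ x = Pi.single i d}

namespace signedUnitVectors

variable {ι R : Type*} [DecidableEq ι]

section Ring

variable [Ring R]

theorem neg_mem {x : ι → R} (hx : x ∈ signedUnitVectors ι R) :
    -x ∈ signedUnitVectors ι R := by
  obtain ⟨i, d, hd, rfl⟩ := hx
  exact ⟨i, -d, by rcases hd with rfl | rfl <;> simp, by rw [Pi.single_neg]⟩

theorem single_one_mem (i : ι) : (Pi.single i 1 : ι → R) ∈ signedUnitVectors ι R :=
  ⟨i, 1, .inl rfl, rfl⟩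

theorem sub_mem_iff {u v : ι → R} : v - u ∈ signedUnitVectors ι R ↔
    ∃ i, (v i - u i = 1 ∨ v i - u i = -1) ∧ ∀ j ≠ i, u j = v j := by
  constructor
  · rintro ⟨i, d, hd, h⟩
    refine ⟨i, by simpa [← Pi.sub_apply, h] using hd, fun j hj => ?_⟩
    simpa [hj, sub_eq_zero, eq_comm] using congrFun h j
  · rintro ⟨i, hi, hj⟩
    refine ⟨i, v i - u i, hi, funext fun j => ?_⟩
    by_cases h : j = i
    · subst h; simp
    · simp [h, hj j h]

theorem ne_zero_of_eq_one_or_eq_neg_one [Nontrivial R] {d : R} (hd : d = 1 ∨ d = -1) :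
    d ≠ 0 := by
  rcases hd with rfl | rfl <;> simp

theorem dotProduct_self_of_mem [Fintype ι] {s : ι → R} (hs : s ∈ signedUnitVectors ι R) :
    s ⬝ᵥ s = 1 := by
  obtain ⟨i, d, hd, rfl⟩ := hs
  rcases hd with rfl | rfl <;> simp

end Ring

section CommRing

variable [CommRing R] [Fintype ι]

/-- Maps preserving `± eᵢ` are signed permutation matrices, hence orthogonal. -/
theorem dotProduct_self_map [Nontrivial R] {A : (ι → R) →ₗ[R] (ι → R)}
    (hA : ∀ s ∈ signedUnitVectors ι R, A s ∈ signedUnitVectors ι R)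
    (hinj : Function.Injective A) (x : ι → R) : A x ⬝ᵥ A x = x ⬝ᵥ x := by
  choose π δ hδ hAπ using fun i => hA _ (single_one_mem i)
  have hδ0 i := ne_zero_of_eq_one_or_eq_neg_one (hδ i)
  have hπ : Function.Injective π := fun i j h => by
    by_contra hij
    have : A (δ j • Pi.single i 1) = A (δ i • Pi.single j 1) := by
      rw [map_smul, map_smul, hAπ, hAπ, h, ← Pi.single_smul, ← Pi.single_smul, smul_eq_mul,
        smul_eq_mul, mul_comm]
    simpa [hij, hδ0 j] using congrFun (hinj this) i
  have hAsingle (j : ι) (c : R) : A (Pi.single j c) = Pi.single (π j) (c * δ j) := by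
    have : Pi.single j c = c • Pi.single j (1 : R) := by
      rw [← Pi.single_smul, smul_eq_mul, mul_one]
    rw [this, map_smul, hAπ, ← Pi.single_smul, smul_eq_mul]
  let e := Equiv.ofBijective π (Finite.injective_iff_bijective.1 hπ)
  have hAx : A x ∘ e = fun i => δ i * x i := by
    funext i
    conv_lhs => rw [← univ_sum_single x]
    simp [e, hAsingle, Pi.single_apply, hπ.eq_iff, mul_comm]
  rw [← comp_equiv_dotProduct_comp_equiv (A x) (A x) e, hAx]
  refine sum_congr rfl fun i _ => ?_
  rcases hδ i with h | h <;> simp [h]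

end CommRing

variable [CommRing R] [NoZeroDivisors R]

theorem isRigidConnectionSet (h2 : (2 : R) ≠ 0) :
    IsRigidConnectionSet (signedUnitVectors ι R) where
  neg_mem _ := neg_mem
  eq_neg_of_add_add_mem := by
    have : Nontrivial R := ⟨⟨2, 0, h2⟩⟩
    rintro _ ⟨i, d, hd, rfl⟩ _ ⟨j, c, hc, rfl⟩ ⟨k, e, he, h⟩
    suffices j = i ∧ c = -d by rw [this.1, this.2, Pi.single_neg]
    have hi := congrFun h i
    have hj := congrFun h j
    have hk := congrFun h k
    simp only [Pi.add_apply, Pi.single_apply] at hi hj hk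
    -- `c = d` would give `3 d = ± 1`, i.e. `2 = 0` or `4 = 0`
    have h4 : (4 : R) ≠ 0 := by simpa [show (4 : R) = 2 * 2 by norm_num] using h2
    have := ne_zero_of_eq_one_or_eq_neg_one hc
    have := ne_zero_of_eq_one_or_eq_neg_one hd
    have := ne_zero_of_eq_one_or_eq_neg_one he
    grind
  eq_neg_or_eq_of_add_eq_add := by
    have : Nontrivial R := ⟨⟨2, 0, h2⟩⟩
    rintro _ ⟨i, d, hd, rfl⟩ _ ⟨k, e, he, rfl⟩ _ ⟨j, c, hc, rfl⟩ _ ⟨l, c', -, rfl⟩ hts hts' h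
    have hik : i ≠ k := by
      rintro rfl
      rw [← Pi.single_neg] at hts'
      rcases hd with rfl | rfl <;> rcases he with rfl | rfl <;> simp_all
    suffices (j = i ∧ c = -d) ∨ (j = k ∧ c = e) by
      rcases this with ⟨rfl, rfl⟩ | ⟨rfl, rfl⟩
      · exact .inl (by rw [Pi.single_neg])
      · exact .inr rfl
    have hi := congrFun h i
    have hk := congrFun h k
    simp only [Pi.add_apply, Pi.single_apply] at hi hk
    have := ne_zero_of_eq_one_or_eq_neg_one hd
    have := ne_zero_of_eq_one_or_eq_neg_one he
    grind

variable [Fintype ι]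

theorem eq_id_of_dotProduct_self_add_map_sub (h2 : (2 : R) ≠ 0) {A : (ι → R) →ₗ[R] (ι → R)}
    (hA : ∀ s ∈ signedUnitVectors ι R, A s ∈ signedUnitVectors ι R) (b : ι → R)
    (h : ∀ c, (b + A c - c) ⬝ᵥ (b + A c - c) = b ⬝ᵥ b) : A = LinearMap.id := by
  refine (Pi.basisFun R ι).ext fun i => ?_
  rw [Pi.basisFun_apply, LinearMap.id_apply]
  set w := A (Pi.single i 1) - Pi.single i 1
  have hplus : (b + w) ⬝ᵥ (b + w) = b ⬝ᵥ b := by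
    simpa [w, add_sub_assoc] using h (Pi.single i 1)
  have hminus : (b - w) ⬝ᵥ (b - w) = b ⬝ᵥ b := by
    convert h (-Pi.single i 1) using 2 <;> simp only [w, map_neg] <;> abel
  have hw : w ⬝ᵥ w = 0 := by
    have hpar :
        (b + w) ⬝ᵥ (b + w) + (b - w) ⬝ᵥ (b - w) = 2 * (b ⬝ᵥ b) + 2 * (w ⬝ᵥ w) := by
      simp only [add_dotProduct, dotProduct_add, sub_dotProduct, dotProduct_sub,
        dotProduct_comm w b]
      ring
    exact (mul_eq_zero.1 (by linear_combination hplus + hminus - hpar)).resolve_left h2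
  have hAi : A (Pi.single i 1) i = 1 := by
    have : w ⬝ᵥ w = 2 * (1 - A (Pi.single i 1) i) := by
      simp only [w, sub_dotProduct, dotProduct_sub, dotProduct_single, single_dotProduct,
        dotProduct_self_of_mem (hA _ (single_one_mem i)), Pi.sub_apply, Pi.single_eq_same]
      ring
    have := (mul_eq_zero.1 (this.symm.trans hw)).resolve_left h2
    linear_combination -this
  obtain ⟨j, d, -, hj⟩ := hA _ (single_one_mem i)
  rw [hj] at hAi ⊢
  by_cases hji : i = j
  · subst hji
    simp_all
  · have : Nontrivial R := ⟨⟨2, 0, h2⟩⟩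
    simp [hji] at hAi

theorem closure_eq_top {p : ℕ} [NeZero p] :
    AddSubgroup.closure (signedUnitVectors ι (ZMod p)) = ⊤ := by
  refine eq_top_iff.2 fun x _ => ?_
  rw [← univ_sum_single x]
  refine AddSubgroup.sum_mem _ fun i _ => ?_
  rw [← ZMod.natCast_zmod_val (x i), ← nsmul_one, Pi.single_smul]
  exact AddSubgroup.nsmul_mem _ (AddSubgroup.subset_closure (single_one_mem i)) _

end signedUnitVectors

theorem IsCayleyGraphAut.exists_linearMap_of_signedUnitVectors {ι : Type*} [Fintype ι]
    [DecidableEq ι] {p : ℕ} [Fact p.Prime] (h2 : (2 : ZMod p) ≠ 0)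
    {f : Equiv.Perm (ι → ZMod p)} (hf : IsCayleyGraphAut (signedUnitVectors ι (ZMod p)) f) :
    ∃ A : (ι → ZMod p) →ₗ[ZMod p] (ι → ZMod p),
      (∀ s ∈ signedUnitVectors ι (ZMod p), A s ∈ signedUnitVectors ι (ZMod p)) ∧
      Function.Injective A ∧ ∀ v, f v = f 0 + A v := by
  obtain ⟨φ, hφ⟩ := hf.exists_addMonoidHom (signedUnitVectors.isRigidConnectionSet h2)
    signedUnitVectors.closure_eq_top
  refine ⟨φ.toZModLinearMap p, fun s hs => ?_, fun u v huv => ?_, hφ⟩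
  · simpa [hφ s] using (hf s 0).2 (by simpa using hs)
  · exact f.injective (by rw [hφ u, hφ v]; exact congrArg _ huv)

theorem Subgroup.nonempty_mulEquiv_multiplicative_of_forall_eq_add {V : Type*} [AddGroup V]
    (Ω : Subgroup (Equiv.Perm V)) (htransl : ∀ σ ∈ Ω, ∀ v, σ v = σ 0 + v)
    (htrans : ∀ v, ∃ σ ∈ Ω, σ 0 = v) : Nonempty (Ω ≃* Multiplicative V) := by
  let F : Ω →* Multiplicative V :=
    { toFun σ := .ofAdd ((σ : Equiv.Perm V) 0)
      map_one' := rfl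
      map_mul' σ τ := by
        simp [Equiv.Perm.mul_apply, htransl σ σ.2 ((τ : Equiv.Perm V) 0), ofAdd_add] }
  refine ⟨.ofBijective F ⟨fun σ τ h => ?_, fun x => ?_⟩⟩
  · ext v
    rw [htransl σ σ.2 v, htransl τ τ.2 v]
    exact congrArg (· + v) h
  · obtain ⟨σ, hσ, h⟩ := htrans x.toAdd
    exact ⟨⟨σ, hσ⟩, congrArg Multiplicative.ofAdd h⟩

theorem stmt_16_general (p n : ℕ) (hp : p.Prime) (hp2 : 2 < p)
    (Adj : (Fin n → ZMod p) → (Fin n → ZMod p) → Prop)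
    (hAdj : ∀ u v, Adj u v ↔
      ∃ i, (v i - u i = 1 ∨ v i - u i = -1) ∧ ∀ j ≠ i, u j = v j)
    (Ω : Subgroup (Equiv.Perm (Fin n → ZMod p)))
    (hcomm : ∀ σ ∈ Ω, ∀ τ ∈ Ω, σ * τ = τ * σ)
    (haut : ∀ σ ∈ Ω, ∀ u v, Adj (σ u) (σ v) ↔ Adj u v)
    (htrans : ∀ u v : Fin n → ZMod p, ∃ σ ∈ Ω, σ u = v) :
    Nonempty (Ω ≃* Multiplicative (Fin n → ZMod p)) := by
  have : Fact p.Prime := ⟨hp⟩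
  have h2 : (2 : ZMod p) ≠ 0 := Ring.two_ne_zero (by rw [ZMod.ringChar_zmod_n]; omega)
  have hΩ (σ : Ω) : IsCayleyGraphAut (signedUnitVectors (Fin n) (ZMod p)) σ := fun u v => by
    simpa only [hAdj, signedUnitVectors.sub_mem_iff] using haut σ σ.2 v u
  choose A hAS hAinj hA using fun σ : Ω => (hΩ σ).exists_linearMap_of_signedUnitVectors h2
  refine Ω.nonempty_mulEquiv_multiplicative_of_forall_eq_add (fun σ hσ v => ?_) (htrans 0)
  suffices A ⟨σ, hσ⟩ = LinearMap.id by rw [hA ⟨σ, hσ⟩ v, this, LinearMap.id_apply]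
  refine signedUnitVectors.eq_id_of_dotProduct_self_add_map_sub h2 (hAS _) (σ 0) fun c => ?_
  obtain ⟨τ, hτ, rfl⟩ := htrans 0 c
  have hστ : σ (τ 0) = τ (σ 0) := by
    simpa only [Equiv.Perm.mul_apply] using congrArg (· 0) (hcomm σ hσ τ hτ)
  rw [hA ⟨σ, hσ⟩ (τ 0), hA ⟨τ, hτ⟩ (σ 0)] at hστ
  rw [show σ 0 + A ⟨σ, hσ⟩ (τ 0) - τ 0 = A ⟨τ, hτ⟩ (σ 0) by rw [hστ]; abel]
  exact signedUnitVectors.dotProduct_self_map (hAS _) (hAinj _) _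

/-- Let `p > 2` be a prime and `n ≥ 1`, and let `G` be the `n`-fold
cartesian product of `p`-cycles: the graph on `(ℤ/pℤ)ⁿ` in which `u` and `v` are
adjacent iff there is an index `i` with `v i - u i ∈ {1, -1}` and `u j = v j` for all
`j ≠ i`.  Then every abelian group `Ω` of adjacency-preserving permutations of the
vertex set that acts transitively on the vertices and has cardinality `pⁿ` is
isomorphic as a group to `(ℤ/pℤ)ⁿ`; hence the cartesian product of `n` `p`-cycles has
dimension `n`. -/
theorem stmt_16 (p n : ℕ) (hp : p.Prime) (hp2 : 2 < p) (hn : 1 ≤ n)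
    (Adj : (Fin n → ZMod p) → (Fin n → ZMod p) → Prop)
    (hAdj : ∀ u v, Adj u v ↔
      ∃ i, (v i - u i = 1 ∨ v i - u i = -1) ∧ ∀ j ≠ i, u j = v j)
    (Ω : Subgroup (Equiv.Perm (Fin n → ZMod p)))
    (hcomm : ∀ σ ∈ Ω, ∀ τ ∈ Ω, σ * τ = τ * σ)
    (haut : ∀ σ ∈ Ω, ∀ u v, Adj (σ u) (σ v) ↔ Adj u v)
    (htrans : ∀ u v : Fin n → ZMod p, ∃ σ ∈ Ω, σ u = v)
    (hcard : Nat.card Ω = p ^ n) :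
    Nonempty (Ω ≃* Multiplicative (Fin n → ZMod p)) :=
  stmt_16_general p n hp hp2 Adj hAdj Ω hcomm haut htrans
end

section
/- Let p ≥ 3 be an integer, let k ≥ 1 and n ≥ 1 be integers, and let r₁, …, r_k be nonnegative integers such that r₁ + ⋯ + r_k ≥ n and p^{r₁} + ⋯ + p^{r_k} = n·p. Then r_h = 1 for every h = 1, …, k (and consequently k = n). In particular this uses that for p ≥ 3 and a nonnegative integer r, p·r < p^r whenever r ≠ 1, with equality p·r = p^r when r = 1. -/
/-! Termwise `p * r ≤ p ^ r`, so `n * p ≤ p * ∑ r ≤ ∑ p ^ r = n * p` is a chain of equalities and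
every term satisfies `p * r = p ^ r`; for `p ≥ 3` this happens only at `r = 1`. -/

open Finset

theorem Nat.mul_lt_pow {p r : ℕ} (hp : 3 ≤ p) (hr : r ≠ 1) : p * r < p ^ r := by
  match r, hr with
  | 0, _ => simp
  | m + 2, _ =>
    have hbound : m + 2 < p ^ (m + 1) := by
      obtain ⟨a, rfl⟩ : ∃ a, p = 1 + a := ⟨p - 1, by omega⟩
      have bernoulli := one_add_le_pow_of_two_add_nonneg (Nat.zero_le (2 + a)) (m + 1)
      push_cast at bernoulli
      nlinarith
    rw [pow_succ']
    exact Nat.mul_lt_mul_of_pos_left hbound (by omega)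

theorem eq_one_of_sum_pow_eq_mul {ι : Type*} (s : Finset ι) {p n : ℕ} (hp : 3 ≤ p) {r : ι → ℕ}
    (hsum : n ≤ ∑ i ∈ s, r i) (hpow : ∑ i ∈ s, p ^ r i = n * p) : ∀ i ∈ s, r i = 1 := by
  have hle : ∀ i ∈ s, p * r i ≤ p ^ r i := fun i _ => Nat.mul_le_pow (by omega : p ≠ 1) (r i)
  have heq : ∑ i ∈ s, p * r i = ∑ i ∈ s, p ^ r i := by
    refine le_antisymm (sum_le_sum hle) ?_
    rw [hpow, ← mul_sum, mul_comm n p]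
    exact Nat.mul_le_mul_left p hsum
  intro i hi
  by_contra hne
  exact (Nat.mul_lt_pow hp hne).ne ((sum_eq_sum_iff_of_le hle).1 heq i hi)

theorem stmt_17_general (p k n : ℕ) (hp : 3 ≤ p)
    (r : Fin k → ℕ) (h1 : n ≤ ∑ h, r h) (h2 : ∑ h, p ^ r h = n * p) :
    (∀ h, r h = 1) ∧ k = n := by
  have hr : ∀ h, r h = 1 := fun h => eq_one_of_sum_pow_eq_mul univ hp h1 h2 h (mem_univ h)
  refine ⟨hr, ?_⟩
  simp only [hr, pow_one, sum_const, card_univ, Fintype.card_fin, smul_eq_mul] at h2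
  exact Nat.eq_of_mul_eq_mul_right (by omega) h2

/-- Let `p ≥ 3`, `k ≥ 1`, `n ≥ 1`, and let `r₁, …, r_k` be
nonnegative integers such that `r₁ + ⋯ + r_k ≥ n` and `p^{r₁} + ⋯ + p^{r_k} = n·p`.
Then `r_h = 1` for every `h`, and consequently `k = n`.  (This is the counting
argument used in the proof that the cartesian product of `n` circulants on `p`
vertices, `p` an odd prime, has dimension `n`.) -/
theorem stmt_17 (p k n : ℕ) (hp : 3 ≤ p) (hk : 1 ≤ k) (hn : 1 ≤ n)
    (r : Fin k → ℕ) (h1 : n ≤ ∑ h, r h) (h2 : ∑ h, p ^ r h = n * p) :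
    (∀ h, r h = 1) ∧ k = n :=
  stmt_17_general p k n hp r h1 h2
end

section
/- Let p be a prime and let D be a digraph on a vertex set V with exactly p vertices whose automorphism group acts transitively on V (i.e., for any two vertices u, v there is an adjacency-preserving permutation of V sending u to v). Then D is isomorphic to a circulant digraph: there exist a set A ⊆ ℤ/pℤ and a bijection e : V → ℤ/pℤ such that for all u, v ∈ V, there is an arc from u to v in D if and only if e(v) − e(u) ∈ A. -/
/-!
The automorphism group acts transitively on `p` points, so `p` divides its order and by Cauchy's
theorem it contains an automorphism `σ` of order `p`. A permutation of `p` points of prime order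
`p` is a `p`-cycle, so `k ↦ σ ^ k v₀` identifies `ℤ/pℤ` with the vertex set. Under this
identification `σ` is the translation `k ↦ k + 1`, and invariance of the arc relation under
translations makes the digraph circulant: `u → v` iff `0 → v - u`.
-/

open Equiv Function

section

variable {V : Type*}

def autGroup (Arc : V → V → Prop) : Subgroup (Perm V) where
  carrier := {σ | ∀ x y, Arc (σ x) (σ y) ↔ Arc x y}
  one_mem' _ _ := Iff.rfl
  mul_mem' ha hb _ _ := (ha _ _).trans (hb _ _)
  inv_mem' {σ} hσ x y := by simpa using (hσ (σ⁻¹ x) (σ⁻¹ y)).symm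

theorem MulAction.exists_orderOf_eq_of_isPretransitive {G X : Type*} [Group G] [Finite G]
    [MulAction G X] [MulAction.IsPretransitive G X] {p : ℕ} [hp : Fact p.Prime]
    (hX : Nat.card X = p) : ∃ g : G, orderOf g = p := by
  obtain ⟨x⟩ := (Nat.card_pos_iff.mp (hX ▸ hp.out.pos)).1
  have hdvd : p ∣ Nat.card G := by
    rw [← hX, ← MulAction.index_stabilizer_of_transitive G x]
    exact Subgroup.index_dvd_card _
  exact exists_prime_orderOf_dvd_card' p hdvd

theorem pow_zmod_val_add {M : Type*} [Monoid M] {x : M} {n : ℕ} [NeZero n] (hx : orderOf x = n)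
    (a b : ZMod n) : x ^ (a + b).val = x ^ a.val * x ^ b.val := by
  subst hx
  rw [ZMod.val_add, pow_mod_orderOf, pow_add]

theorem Equiv.Perm.bijective_pow_val_apply_of_orderOf_eq_card [Fintype V] {p : ℕ}
    [hp : Fact p.Prime] (hV : Fintype.card V = p) {σ : Perm V} (hσ : orderOf σ = p) (v₀ : V) :
    Bijective fun k : ZMod p => (σ ^ k.val) v₀ := by
  classical
  subst hV
  have hcycle : σ.IsCycle := Perm.isCycle_of_prime_order'' hp.out hσ
  have hsupport : σ.support = Finset.univ :=
    Finset.eq_univ_of_card _ (hcycle.orderOf ▸ hσ)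
  have hmoved : ∀ v, σ v ≠ v := fun v => Perm.mem_support.mp (hsupport ▸ Finset.mem_univ v)
  refine (Fintype.bijective_iff_surjective_and_card _).mpr ⟨fun v => ?_, ZMod.card _⟩
  obtain ⟨i, hi⟩ := hcycle.exists_pow_eq (hmoved v₀) (hmoved v)
  exact ⟨i, by dsimp only; rw [ZMod.val_natCast, ← hσ, pow_mod_orderOf, hi]⟩

/-- Sabidussi's criterion for a cyclic group of automorphisms acting regularly. -/
theorem exists_circulant_of_bijective_pow_val_apply {Arc : V → V → Prop} {n : ℕ} [NeZero n]
    {σ : Perm V} (hσ : σ ∈ autGroup Arc) (hn : orderOf σ = n) {v₀ : V}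
    (hbij : Bijective fun k : ZMod n => (σ ^ k.val) v₀) :
    ∃ (A : Set (ZMod n)) (e : V ≃ ZMod n), ∀ u v : V, Arc u v ↔ e v - e u ∈ A := by
  set f : ZMod n ≃ V := Equiv.ofBijective _ hbij
  have hf : ∀ a b, f (a + b) = (σ ^ a.val) (f b) := fun a b =>
    congrArg (· v₀) (pow_zmod_val_add hn a b)
  have htranslate : ∀ a b, Arc (f a) (f b) ↔ Arc (f 0) (f (b - a)) := fun a b => by
    have hfa : f a = (σ ^ a.val) (f 0) := by rw [← hf, add_zero]
    rw [hfa, ← add_sub_cancel a b, hf a (b - a), add_sub_cancel_left]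
    exact (autGroup Arc).pow_mem hσ a.val _ _
  refine ⟨{k | Arc (f 0) (f k)}, f.symm, fun u v => ?_⟩
  simpa only [Set.mem_ofPred_eq, Equiv.apply_symm_apply] using htranslate (f.symm u) (f.symm v)

end

/-- Turner's theorem for digraphs.  Let `p` be a prime and let `D`
be a digraph on a vertex set `V` with exactly `p` vertices whose automorphism group
acts transitively on `V`.  Then `D` is isomorphic to a circulant digraph: there exist
a set `A ⊆ ℤ/pℤ` and a bijection `e : V → ℤ/pℤ` such that for all `u, v ∈ V` there is
an arc from `u` to `v` in `D` iff `e v - e u ∈ A`. -/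
theorem stmt_18 (p : ℕ) (hp : p.Prime) (V : Type*) [Fintype V]
    (hV : Fintype.card V = p) (Arc : V → V → Prop)
    (htrans : ∀ u v : V, ∃ σ : Equiv.Perm V,
      (∀ x y : V, Arc (σ x) (σ y) ↔ Arc x y) ∧ σ u = v) :
    ∃ (A : Set (ZMod p)) (e : V ≃ ZMod p),
      ∀ u v : V, Arc u v ↔ e v - e u ∈ A := by
  have : Fact p.Prime := ⟨hp⟩
  have : MulAction.IsPretransitive (autGroup Arc) V :=
    ⟨fun u v => (htrans u v).elim fun σ hσ => ⟨⟨σ, hσ.1⟩, hσ.2⟩⟩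
  obtain ⟨v₀⟩ : Nonempty V := Fintype.card_pos_iff.mp (hV ▸ hp.pos)
  obtain ⟨σ, hσ⟩ := MulAction.exists_orderOf_eq_of_isPretransitive (G := autGroup Arc)
    (Nat.card_eq_fintype_card.trans hV)
  rw [← Subgroup.orderOf_coe] at hσ
  exact exists_circulant_of_bijective_pow_val_apply σ.2 hσ
    (Perm.bijective_pow_val_apply_of_orderOf_eq_card hV hσ v₀)
end
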